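/- Fix n ≥ 2 and a symmetric nonnegative weight function g on pairs of states with maximum capacity C (bottleneck capacity of the weighted complete graph). Let p, p' be probability distributions on {1,…,n} with min_i min{p_i, p'_i} > m for some m ≥ 0. Then there exists a finite sequence of 'elementary moves', each transferring some amount Δ > 0 of probability between two states a, b with g(a,b) ≥ C, transforming p into p', such that at every intermediate distribution r in the sequence, r_i ≥ min{p_i, p'_i} > m for all i. -/

import Mathlib

/-
Choose `a` with `r a > p' a` and `b` with `r b < p' b` (they exist while `r ≠ p'`, since the totals
agree) and push `Δ = min (r a - p' a) (p' b - r b)` from `a` to `b` along a path of maximal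
capacity, whose edges all have weight at least `maxCapacity g`. While the mass travels, only the
current endpoint of the path gains and only `a` loses, so no state drops below `min (p i) (p' i)`.
Each such transfer settles `a` or `b` for good, so finitely many transfers reach `p'`.
-/

open Finset

/-- The capacity of a path `x 0 → x 1 → ⋯ → x m` (with `m ≥ 1` steps) under edge
weights `g`: the minimum edge weight along the path. -/
noncomputable def pathCapacity {n : ℕ} (g : Fin n → Fin n → ℝ) (m : ℕ)
    (x : ℕ → Fin n) : ℝ :=
  sInf {y : ℝ | ∃ k < m, y = g (x k) (x (k + 1))}

/-- The maximum (bottleneck) capacity of the weighted complete graph on `Fin n`. -/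
noncomputable def maxCapacity {n : ℕ} (g : Fin n → Fin n → ℝ) : ℝ :=
  sInf {y : ℝ | ∃ i j : Fin n, i ≠ j ∧
    y = sSup {c : ℝ | ∃ m : ℕ, 1 ≤ m ∧ ∃ x : ℕ → Fin n,
      x 0 = i ∧ x m = j ∧ c = pathCapacity g m x}}

/-- An elementary move `(a, b, Δ)` transfers `Δ` of probability from state `a`
to state `b`. -/
noncomputable def applyMove {n : ℕ} (r : Fin n → ℝ) (mv : Fin n × Fin n × ℝ) :
    Fin n → ℝ :=
  fun i => r i + mv.2.2 * ((if i = mv.2.1 then (1:ℝ) else 0) - (if i = mv.1 then (1:ℝ) else 0))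

section Capacity

variable {n : ℕ} (g : Fin n → Fin n → ℝ)

lemma finite_edgeWeights (m : ℕ) (x : ℕ → Fin n) :
    {y : ℝ | ∃ k < m, y = g (x k) (x (k + 1))}.Finite :=
  (Set.finite_range (Function.uncurry g)).subset <| by
    rintro _ ⟨k, -, rfl⟩
    exact ⟨(x k, x (k + 1)), rfl⟩

lemma pathCapacity_le {m k : ℕ} (x : ℕ → Fin n) (hk : k < m) :
    pathCapacity g m x ≤ g (x k) (x (k + 1)) :=
  csInf_le (finite_edgeWeights g m x).bddBelow ⟨k, hk, rfl⟩

lemma pathCapacity_mem_range {m : ℕ} (hm : 1 ≤ m) (x : ℕ → Fin n) :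
    pathCapacity g m x ∈ Set.range (Function.uncurry g) := by
  obtain ⟨k, -, hk⟩ := Set.Nonempty.csInf_mem (s := {y : ℝ | ∃ k < m, y = g (x k) (x (k + 1))})
    ⟨_, 0, hm, rfl⟩ (finite_edgeWeights g m x)
  exact ⟨(x k, x (k + 1)), hk.symm⟩

def pathCapacities (i j : Fin n) : Set ℝ :=
  {c : ℝ | ∃ m : ℕ, 1 ≤ m ∧ ∃ x : ℕ → Fin n, x 0 = i ∧ x m = j ∧ c = pathCapacity g m x}

lemma exists_pathCapacity_eq_sSup (i j : Fin n) :
    ∃ m : ℕ, ∃ x : ℕ → Fin n, x 0 = i ∧ x m = j ∧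
      pathCapacity g m x = sSup (pathCapacities g i j) := by
  have hfin : (pathCapacities g i j).Finite :=
    (Set.finite_range (Function.uncurry g)).subset <| by
      rintro _ ⟨m, hm, x, -, -, rfl⟩
      exact pathCapacity_mem_range g hm x
  have hne : (pathCapacities g i j).Nonempty :=
    ⟨_, 1, le_rfl, fun k => if k = 0 then i else j, rfl, rfl, rfl⟩
  obtain ⟨m, -, x, hx0, hxm, hc⟩ := hne.csSup_mem hfin
  exact ⟨m, x, hx0, hxm, hc.symm⟩

lemma maxCapacity_le_sSup_pathCapacities {i j : Fin n} (hij : i ≠ j) :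
    maxCapacity g ≤ sSup (pathCapacities g i j) := by
  refine csInf_le (Set.Finite.bddBelow ?_) ⟨i, j, hij, rfl⟩
  refine (Set.finite_range fun ij : Fin n × Fin n => sSup (pathCapacities g ij.1 ij.2)).subset ?_
  rintro _ ⟨i, j, -, rfl⟩
  exact ⟨(i, j), rfl⟩

def CapacityConnected (C : ℝ) : Prop :=
  ∀ i j : Fin n, i ≠ j → ∃ m : ℕ, ∃ x : ℕ → Fin n, x 0 = i ∧ x m = j ∧
    ∀ k < m, C ≤ g (x k) (x (k + 1))

theorem capacityConnected_maxCapacity : CapacityConnected g (maxCapacity g) := by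
  intro i j hij
  obtain ⟨m, x, hx0, hxm, hcap⟩ := exists_pathCapacity_eq_sSup g i j
  refine ⟨m, x, hx0, hxm, fun k hk => ?_⟩
  calc maxCapacity g ≤ sSup (pathCapacities g i j) := maxCapacity_le_sSup_pathCapacities g hij
    _ = pathCapacity g m x := hcap.symm
    _ ≤ g (x k) (x (k + 1)) := pathCapacity_le g x hk

end Capacity

section Moves

variable {n : ℕ}

lemma applyMove_apply_source (r : Fin n → ℝ) {a b : Fin n} (hab : a ≠ b) (Δ : ℝ) :
    applyMove r (a, b, Δ) a = r a - Δ := by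
  simp [applyMove, hab, sub_eq_add_neg]

lemma applyMove_apply_target (r : Fin n → ℝ) {a b : Fin n} (hab : a ≠ b) (Δ : ℝ) :
    applyMove r (a, b, Δ) b = r b + Δ := by
  simp [applyMove, hab.symm]

lemma applyMove_apply_of_ne (r : Fin n → ℝ) {a b i : Fin n} (ha : i ≠ a) (hb : i ≠ b) (Δ : ℝ) :
    applyMove r (a, b, Δ) i = r i := by
  simp [applyMove, ha, hb]

lemma applyMove_self (r : Fin n → ℝ) (a : Fin n) (Δ : ℝ) : applyMove r (a, a, Δ) = r := by
  funext i
  simp [applyMove]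

lemma applyMove_applyMove (r : Fin n → ℝ) (a b c : Fin n) (Δ : ℝ) :
    applyMove (applyMove r (a, b, Δ)) (b, c, Δ) = applyMove r (a, c, Δ) := by
  funext i
  simp only [applyMove]
  ring

lemma sum_applyMove (r : Fin n → ℝ) (mv : Fin n × Fin n × ℝ) :
    ∑ i, applyMove r mv i = ∑ i, r i := by
  simp [applyMove, sum_add_distrib, ← mul_sum]

lemma le_applyMove {lo r : Fin n → ℝ} {a b : Fin n} {Δ : ℝ} (hr : lo ≤ r)
    (ha : lo a ≤ r a - Δ) (hΔ : 0 ≤ Δ) : lo ≤ applyMove r (a, b, Δ) := by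
  intro i
  by_cases hia : i = a
  · subst hia
    by_cases hib : i = b
    · subst hib; rw [applyMove_self]; exact hr i
    · rw [applyMove_apply_source r hib]; exact ha
  by_cases hib : i = b
  · subst hib; rw [applyMove_apply_target r (Ne.symm hia)]; linarith [hr i]
  · rw [applyMove_apply_of_ne r hia hib]; exact hr i

lemma le_applyMove_apply_target {r : Fin n → ℝ} {a b : Fin n} {Δ : ℝ} (hr : 0 ≤ r)
    (hΔ : Δ ≤ r a) : Δ ≤ applyMove r (a, b, Δ) b := by
  by_cases hab : a = b
  · subst hab; rwa [applyMove_self]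
  · rw [applyMove_apply_target r hab]; linarith [show 0 ≤ r b from hr b]

end Moves

section Schedules

variable {n : ℕ}

def pathMoves (x : ℕ → Fin n) (Δ : ℝ) (m : ℕ) : List (Fin n × Fin n × ℝ) :=
  (List.range m).map fun k => (x k, x (k + 1), Δ)

lemma length_pathMoves (x : ℕ → Fin n) (Δ : ℝ) (m : ℕ) : (pathMoves x Δ m).length = m := by
  simp [pathMoves]

lemma getElem_pathMoves (x : ℕ → Fin n) (Δ : ℝ) {m k : ℕ} (hk : k < (pathMoves x Δ m).length) :
    (pathMoves x Δ m)[k] = (x k, x (k + 1), Δ) := by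
  simp [pathMoves]

lemma take_pathMoves (x : ℕ → Fin n) (Δ : ℝ) {m k : ℕ} (hk : k ≤ m) :
    (pathMoves x Δ m).take k = pathMoves x Δ k := by
  simp [pathMoves, ← List.map_take, List.take_range, Nat.min_eq_left hk]

lemma foldl_pathMoves (x : ℕ → Fin n) (Δ : ℝ) (m : ℕ) (r : Fin n → ℝ) :
    (pathMoves x Δ m).foldl applyMove r = applyMove r (x 0, x m, Δ) := by
  induction m with
  | zero => simp [pathMoves, applyMove_self]
  | succ m ih =>
    rw [pathMoves, List.range_succ, List.map_append, List.foldl_append, ← pathMoves, ih]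
    exact applyMove_applyMove r _ _ _ Δ

def AdmissibleMoves (g : Fin n → Fin n → ℝ) (C : ℝ) (r : Fin n → ℝ)
    (L : List (Fin n × Fin n × ℝ)) : Prop :=
  ∀ k : ℕ, ∀ hk : k < L.length,
    0 < L[k].2.2 ∧ C ≤ g L[k].1 L[k].2.1 ∧ L[k].2.2 ≤ (L.take k).foldl applyMove r L[k].1

def StaysAbove (lo r : Fin n → ℝ) (L : List (Fin n × Fin n × ℝ)) : Prop :=
  ∀ k ≤ L.length, lo ≤ (L.take k).foldl applyMove r

variable {g : Fin n → Fin n → ℝ} {C : ℝ} {lo r : Fin n → ℝ} {L₁ L₂ : List (Fin n × Fin n × ℝ)}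

lemma AdmissibleMoves.append (h₁ : AdmissibleMoves g C r L₁)
    (h₂ : AdmissibleMoves g C (L₁.foldl applyMove r) L₂) : AdmissibleMoves g C r (L₁ ++ L₂) := by
  intro k hk
  by_cases hk₁ : k < L₁.length
  · simp only [List.getElem_append_left hk₁, List.take_append_of_le_length hk₁.le]
    exact h₁ k hk₁
  · rw [not_lt] at hk₁
    have hk₂ : k - L₁.length < L₂.length := by simp at hk; omega
    simp only [List.getElem_append_right hk₁, List.take_append, List.take_of_length_le hk₁,
      List.foldl_append]
    exact h₂ _ hk₂

lemma StaysAbove.append (h₁ : StaysAbove lo r L₁) (h₂ : StaysAbove lo (L₁.foldl applyMove r) L₂) :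
    StaysAbove lo r (L₁ ++ L₂) := by
  intro k hk
  by_cases hk₁ : k ≤ L₁.length
  · rw [List.take_append_of_le_length hk₁]
    exact h₁ k hk₁
  · rw [not_le] at hk₁
    rw [List.take_append, List.take_of_length_le hk₁.le, List.foldl_append]
    exact h₂ _ (by simp at hk; omega)

lemma admissibleMoves_pathMoves {x : ℕ → Fin n} {Δ : ℝ} {m : ℕ}
    (hx : ∀ k < m, C ≤ g (x k) (x (k + 1))) (hΔ : 0 < Δ) (hΔr : Δ ≤ r (x 0)) (hr : 0 ≤ r) :
    AdmissibleMoves g C r (pathMoves x Δ m) := by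
  intro k hk
  have hkm : k < m := length_pathMoves x Δ m ▸ hk
  simp only [getElem_pathMoves, take_pathMoves x Δ hkm.le, foldl_pathMoves]
  exact ⟨hΔ, hx k hkm, le_applyMove_apply_target hr hΔr⟩

lemma staysAbove_pathMoves {x : ℕ → Fin n} {Δ : ℝ} {m : ℕ} (hr : lo ≤ r)
    (hx : lo (x 0) ≤ r (x 0) - Δ) (hΔ : 0 ≤ Δ) : StaysAbove lo r (pathMoves x Δ m) := by
  intro k hk
  rw [take_pathMoves x Δ (length_pathMoves x Δ m ▸ hk), foldl_pathMoves]
  exact le_applyMove hr hx hΔ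

lemma exists_moves_eq_applyMove (hC : CapacityConnected g C) {a b : Fin n} (hab : a ≠ b)
    {Δ : ℝ} (hΔ : 0 < Δ) (hlo : 0 ≤ lo) (hr : lo ≤ r) (ha : lo a ≤ r a - Δ) :
    ∃ L, L.foldl applyMove r = applyMove r (a, b, Δ) ∧
      AdmissibleMoves g C r L ∧ StaysAbove lo r L := by
  obtain ⟨m, x, rfl, rfl, hx⟩ := hC _ _ hab
  refine ⟨pathMoves x Δ m, foldl_pathMoves x Δ m r,
    admissibleMoves_pathMoves hx hΔ ?_ (hlo.trans hr), staysAbove_pathMoves hr ha hΔ.le⟩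
  linarith [show 0 ≤ lo (x 0) from hlo (x 0)]

end Schedules

section Transport

variable {n : ℕ}

lemma exists_lt_and_lt_of_sum_eq {r t : Fin n → ℝ} (hsum : ∑ i, r i = ∑ i, t i) (hrt : r ≠ t) :
    ∃ a b, t a < r a ∧ r b < t b := by
  have key : ∀ u v : Fin n → ℝ, ∑ i, u i = ∑ i, v i → u ≠ v → ∃ a, u a < v a := by
    intro u v huv hne
    by_contra! h
    exact hne (funext fun i => ((sum_eq_sum_iff_of_le fun i _ => h i).1 huv.symm i (mem_univ i)).symm)
  obtain ⟨a, ha⟩ := key t r hsum.symm (Ne.symm hrt)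
  obtain ⟨b, hb⟩ := key r t hsum hrt
  exact ⟨a, b, ha, hb⟩

/-- Moving `min (r a - t a) (t b - r b)` from `a` to `b` makes `r` agree with `t` at `a` or `b`. -/
lemma card_ne_applyMove_lt {r t : Fin n → ℝ} {a b : Fin n} (ha : t a < r a) (hb : r b < t b) :
    #{i | applyMove r (a, b, min (r a - t a) (t b - r b)) i ≠ t i} < #{i | r i ≠ t i} := by
  have hab : a ≠ b := by rintro rfl; linarith
  refine card_lt_card ((ssubset_iff_of_subset ?_).2 ?_)
  · intro i
    simp only [mem_filter, mem_univ, true_and]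
    intro hi
    by_cases hia : i = a
    · exact hia ▸ ha.ne'
    by_cases hib : i = b
    · exact hib ▸ hb.ne
    rwa [applyMove_apply_of_ne r hia hib] at hi
  · rcases le_total (r a - t a) (t b - r b) with h | h
    · exact ⟨a, by simp [ha.ne'], by simp [applyMove_apply_source r hab, min_eq_left h]⟩
    · exact ⟨b, by simp [hb.ne], by simp [applyMove_apply_target r hab, min_eq_right h]⟩

theorem exists_admissibleMoves_of_sum_eq {g : Fin n → Fin n → ℝ} {C : ℝ}
    (hC : CapacityConnected g C) {lo t : Fin n → ℝ} (hlo : 0 ≤ lo) (ht : lo ≤ t)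
    (r : Fin n → ℝ) (hr : lo ≤ r) (hsum : ∑ i, r i = ∑ i, t i) :
    ∃ L, L.foldl applyMove r = t ∧ AdmissibleMoves g C r L ∧ StaysAbove lo r L := by
  induction hN : #{i | r i ≠ t i} using Nat.strong_induction_on generalizing r with
  | _ N ih =>
  by_cases hrt : r = t
  · exact ⟨[], hrt, fun k hk => absurd hk (Nat.not_lt_zero k), fun k _ => by simpa using hr⟩
  obtain ⟨a, b, ha, hb⟩ := exists_lt_and_lt_of_sum_eq hsum hrt
  have hab : a ≠ b := by rintro rfl; linarith
  set Δ := min (r a - t a) (t b - r b)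
  have hΔ : 0 < Δ := lt_min (sub_pos.2 ha) (sub_pos.2 hb)
  have hΔa : lo a ≤ r a - Δ := by linarith [ht a, min_le_left (r a - t a) (t b - r b)]
  obtain ⟨L₁, hfold₁, hadm₁, habove₁⟩ := exists_moves_eq_applyMove hC hab hΔ hlo hr hΔa
  obtain ⟨L₂, hfold₂, hadm₂, habove₂⟩ :=
    ih _ (hN ▸ card_ne_applyMove_lt ha hb) (applyMove r (a, b, Δ))
      (le_applyMove hr hΔa hΔ.le) (by rw [sum_applyMove, hsum]) rfl
  refine ⟨L₁ ++ L₂, by rw [List.foldl_append, hfold₁, hfold₂], hadm₁.append ?_, habove₁.append ?_⟩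
  · rwa [hfold₁]
  · rwa [hfold₁]

end Transport

theorem stmt_19_general (n : ℕ)
    (g : Fin n → Fin n → ℝ)
    (p p' : Fin n → ℝ)
    (hp : ∀ i, 0 ≤ p i) (hp1 : ∑ i : Fin n, p i = 1)
    (hp' : ∀ i, 0 ≤ p' i) (hp'1 : ∑ i : Fin n, p' i = 1) :
    ∃ L : List (Fin n × Fin n × ℝ),
      -- the sequence of elementary moves transforms p into p'
      L.foldl applyMove p = p' ∧
      -- each move transfers a positive amount Δ between states a, b with g(a,b) ≥ C,
      -- and transfers no more than the current probability of the source state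
      (∀ k : ℕ, ∀ hk : k < L.length,
        0 < (L.get ⟨k, hk⟩).2.2 ∧
        maxCapacity g ≤ g (L.get ⟨k, hk⟩).1 (L.get ⟨k, hk⟩).2.1 ∧
        (L.get ⟨k, hk⟩).2.2 ≤ ((L.take k).foldl applyMove p) (L.get ⟨k, hk⟩).1) ∧
      -- every intermediate distribution stays above min{p_i, p'_i} > m
      (∀ k : ℕ, k ≤ L.length → ∀ i,
        min (p i) (p' i) ≤ ((L.take k).foldl applyMove p) i) := by
  have hlo : (0 : Fin n → ℝ) ≤ fun i => min (p i) (p' i) := fun i => le_min (hp i) (hp' i)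
  obtain ⟨L, hfold, hadm, habove⟩ :=
    exists_admissibleMoves_of_sum_eq (capacityConnected_maxCapacity g) hlo
      (fun i => min_le_right (p i) (p' i)) p (fun i => min_le_left (p i) (p' i))
      (hp1.trans hp'1.symm)
  exact ⟨L, hfold, hadm, habove⟩

theorem stmt_19 (n : ℕ) (hn : 2 ≤ n)
    (g : Fin n → Fin n → ℝ) (hsym : ∀ i j, g i j = g j i) (hnonneg : ∀ i j, 0 ≤ g i j)
    (p p' : Fin n → ℝ)
    (hp : ∀ i, 0 ≤ p i) (hp1 : ∑ i : Fin n, p i = 1)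
    (hp' : ∀ i, 0 ≤ p' i) (hp'1 : ∑ i : Fin n, p' i = 1)
    (m : ℝ) (hm : 0 ≤ m) (hmin : ∀ i, m < min (p i) (p' i)) :
    ∃ L : List (Fin n × Fin n × ℝ),
      -- the sequence of elementary moves transforms p into p'
      L.foldl applyMove p = p' ∧
      -- each move transfers a positive amount Δ between states a, b with g(a,b) ≥ C,
      -- and transfers no more than the current probability of the source state
      (∀ k : ℕ, ∀ hk : k < L.length,
        0 < (L.get ⟨k, hk⟩).2.2 ∧
        maxCapacity g ≤ g (L.get ⟨k, hk⟩).1 (L.get ⟨k, hk⟩).2.1 ∧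
        (L.get ⟨k, hk⟩).2.2 ≤ ((L.take k).foldl applyMove p) (L.get ⟨k, hk⟩).1) ∧
      -- every intermediate distribution stays above min{p_i, p'_i} > m
      (∀ k : ℕ, k ≤ L.length → ∀ i,
        min (p i) (p' i) ≤ ((L.take k).foldl applyMove p) i) :=
  stmt_19_general n g p p' hp hp1 hp' hp'1
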